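/- Let X be a quasi-étale diffeological space and π : M → X a smooth map from a manifold which is a local subduction with totally disconnected fibers. Then π is automatically quasi-étale, i.e. it additionally satisfies the rigidity property (QE3). -/

import Mathlib

open Set Function
open scoped Manifold

/-! ## Diffeological spaces -/

/-- A diffeology on a type `X`.  A plot is a map `(Fin n → ℝ) → X` together with an open
domain `U ⊆ ℝⁿ`; only the values on `U` matter. -/
structure Diffeology' (X : Type*) where
  IsPlot : {n : ℕ} → Set (Fin n → ℝ) → ((Fin n → ℝ) → X) → Prop
  isOpen_of_isPlot : ∀ {n : ℕ} {U : Set (Fin n → ℝ)} {φ : (Fin n → ℝ) → X},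
      IsPlot U φ → IsOpen U
  isPlot_const : ∀ {n : ℕ} {U : Set (Fin n → ℝ)}, IsOpen U → ∀ x : X,
      IsPlot U fun _ => x
  isPlot_congr : ∀ {n : ℕ} {U : Set (Fin n → ℝ)} {φ ψ : (Fin n → ℝ) → X},
      Set.EqOn φ ψ U → IsPlot U φ → IsPlot U ψ
  isPlot_comp : ∀ {n m : ℕ} {U : Set (Fin n → ℝ)} {φ : (Fin n → ℝ) → X}
      {V : Set (Fin m → ℝ)} {g : (Fin m → ℝ) → (Fin n → ℝ)},
      IsPlot U φ → IsOpen V → ContDiffOn ℝ (⊤ : ℕ∞) g V → Set.MapsTo g V U →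
      IsPlot V (φ ∘ g)
  isPlot_locality : ∀ {n : ℕ} {U : Set (Fin n → ℝ)} {φ : (Fin n → ℝ) → X}, IsOpen U →
      (∀ u ∈ U, ∃ V, V ⊆ U ∧ IsOpen V ∧ u ∈ V ∧ IsPlot V φ) → IsPlot U φ

namespace Diffeology'

variable {X Y : Type*}

/-- A subset is D-open if its preimage under every plot is open. -/
def dOpen (DX : Diffeology' X) (S : Set X) : Prop :=
  ∀ {n : ℕ} {U : Set (Fin n → ℝ)} {φ : (Fin n → ℝ) → X},
    DX.IsPlot U φ → IsOpen (U ∩ φ ⁻¹' S)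

/-- The product diffeology. -/
def prod (DX : Diffeology' X) (DY : Diffeology' Y) : Diffeology' (X × Y) where
  IsPlot U φ := DX.IsPlot U (fun u => (φ u).1) ∧ DY.IsPlot U (fun u => (φ u).2)
  isOpen_of_isPlot h := DX.isOpen_of_isPlot h.1
  isPlot_const hU x := ⟨DX.isPlot_const hU x.1, DY.isPlot_const hU x.2⟩
  isPlot_congr h hp :=
    ⟨DX.isPlot_congr (fun u hu => by rw [h hu]) hp.1,
     DY.isPlot_congr (fun u hu => by rw [h hu]) hp.2⟩
  isPlot_comp h hV hg hmap :=
    ⟨DX.isPlot_comp h.1 hV hg hmap, DY.isPlot_comp h.2 hV hg hmap⟩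
  isPlot_locality hU h :=
    ⟨DX.isPlot_locality hU fun u hu => by
        obtain ⟨V, h1, h2, h3, h4⟩ := h u hu; exact ⟨V, h1, h2, h3, h4.1⟩,
     DY.isPlot_locality hU fun u hu => by
        obtain ⟨V, h1, h2, h3, h4⟩ := h u hu; exact ⟨V, h1, h2, h3, h4.2⟩⟩

/-- The subset diffeology. -/
def subset (DX : Diffeology' X) (S : Set X) : Diffeology' S where
  IsPlot U φ := DX.IsPlot U fun u => (φ u : X)
  isOpen_of_isPlot h := DX.isOpen_of_isPlot h
  isPlot_const hU x := DX.isPlot_const hU (x : X)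
  isPlot_congr h hp := DX.isPlot_congr (fun u hu => congrArg Subtype.val (h hu)) hp
  isPlot_comp h hV hg hmap := DX.isPlot_comp h hV hg hmap
  isPlot_locality hU h := DX.isPlot_locality hU fun u hu => h u hu

end Diffeology'

variable {X Y Z : Type*}

/-- Smooth maps of diffeological spaces. -/
def DSmooth' (DX : Diffeology' X) (DY : Diffeology' Y) (f : X → Y) : Prop :=
  ∀ {n : ℕ} {U : Set (Fin n → ℝ)} {φ : (Fin n → ℝ) → X},
    DX.IsPlot U φ → DY.IsPlot U (f ∘ φ)

/-- Smoothness of a map on a subset (w.r.t. the subset diffeology). -/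
def DSmoothOn (DX : Diffeology' X) (DY : Diffeology' Y) (f : X → Y) (O : Set X) : Prop :=
  ∀ {n : ℕ} {U : Set (Fin n → ℝ)} {φ : (Fin n → ℝ) → X},
    DX.IsPlot U φ → Set.MapsTo φ U O → DY.IsPlot U (f ∘ φ)

/-- Subductions: plots downstairs lift locally. -/
def IsSubduction (DX : Diffeology' X) (DY : Diffeology' Y) (f : X → Y) : Prop :=
  DSmooth' DX DY f ∧
    ∀ {n : ℕ} {U : Set (Fin n → ℝ)} {φ : (Fin n → ℝ) → Y}, DY.IsPlot U φ → ∀ u ∈ U,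
      ∃ V, V ⊆ U ∧ IsOpen V ∧ u ∈ V ∧ ∃ ψ, DX.IsPlot V ψ ∧ Set.EqOn (f ∘ ψ) φ V

/-- Local subductions: plots lift locally through any prescribed point of the fiber. -/
def IsLocalSubduction (DX : Diffeology' X) (DY : Diffeology' Y) (f : X → Y) : Prop :=
  DSmooth' DX DY f ∧
    ∀ {n : ℕ} {U : Set (Fin n → ℝ)} {φ : (Fin n → ℝ) → Y}, DY.IsPlot U φ →
      ∀ u ∈ U, ∀ x : X, f x = φ u →
      ∃ V, V ⊆ U ∧ IsOpen V ∧ u ∈ V ∧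
        ∃ ψ, DX.IsPlot V ψ ∧ ψ u = x ∧ Set.EqOn (f ∘ ψ) φ V

/-- `DY` is the quotient diffeology of `DX` along `π`: plots are exactly the maps that
locally lift to plots of `X`. -/
def IsQuotientDiffeology (DX : Diffeology' X) (π : X → Y) (DY : Diffeology' Y) : Prop :=
  ∀ {n : ℕ} (U : Set (Fin n → ℝ)) (φ : (Fin n → ℝ) → Y),
    DY.IsPlot U φ ↔ (IsOpen U ∧ ∀ u ∈ U, ∃ V, V ⊆ U ∧ IsOpen V ∧ u ∈ V ∧
      ∃ ψ, DX.IsPlot V ψ ∧ Set.EqOn (π ∘ ψ) φ V)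

/-- A subset is totally disconnected if every plot taking values in it is locally constant. -/
def TotallyDisconnectedIn (DX : Diffeology' X) (S : Set X) : Prop :=
  ∀ {n : ℕ} {U : Set (Fin n → ℝ)} {φ : (Fin n → ℝ) → X},
    DX.IsPlot U φ → Set.MapsTo φ U S → ∀ u ∈ U,
      ∃ V, V ⊆ U ∧ IsOpen V ∧ u ∈ V ∧ ∀ v ∈ V, φ v = φ u

/-- `f` is a local diffeomorphism on the D-open set `O`. -/
def IsLocalDiffeoOn (DX : Diffeology' X) (f : X → X) (O : Set X) : Prop :=
  ∀ x ∈ O, ∃ V, V ⊆ O ∧ DX.dOpen V ∧ x ∈ V ∧ DX.dOpen (f '' V) ∧ Set.InjOn f V ∧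
    ∃ g : X → X, DSmoothOn DX DX g (f '' V) ∧ ∀ v ∈ V, g (f v) = v

/-- Quasi-étale maps of diffeological spaces: (QE1) a local subduction, (QE2) with totally
disconnected fibers, such that (QE3) every smooth map over the base defined on a D-open set
is a local diffeomorphism. -/
def IsQuasiEtale (DX : Diffeology' X) (DY : Diffeology' Y) (π : X → Y) : Prop :=
  IsLocalSubduction DX DY π ∧
  (∀ y : Y, TotallyDisconnectedIn DX (π ⁻¹' {y})) ∧
  ∀ (O : Set X) (f : X → X), DX.dOpen O → DSmoothOn DX DX f O →
    (∀ x ∈ O, π (f x) = π x) → IsLocalDiffeoOn DX f O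

/-! ## Manifolds as diffeological spaces -/

/-- `DM` is the manifold diffeology of the manifold `M`: plots are the smooth maps from
open subsets of Euclidean spaces. -/
def IsManifoldDiffeology {E H : Type*} [NormedAddCommGroup E] [NormedSpace ℝ E]
    [TopologicalSpace H] (I : ModelWithCorners ℝ E H) {M : Type*} [TopologicalSpace M]
    [ChartedSpace H M] (DM : Diffeology' M) : Prop :=
  ∀ {n : ℕ} (U : Set (Fin n → ℝ)) (φ : (Fin n → ℝ) → M),
    DM.IsPlot U φ ↔ (IsOpen U ∧ ContMDiffOn 𝓘(ℝ, Fin n → ℝ) I (⊤ : ℕ∞) φ U)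

/-- A witness that the diffeological space `(M, DM)` is a smooth (finite-dimensional,
Hausdorff, second countable) manifold with its manifold diffeology. -/
structure ManifoldDiffeologyWitness (M : Type*) (DM : Diffeology' M) where
  d : ℕ
  [tM : TopologicalSpace M]
  [cM : ChartedSpace (EuclideanSpace ℝ (Fin d)) M]
  smooth : IsManifold (𝓡 d) (⊤ : ℕ∞) M
  t2 : T2Space M
  sc : SecondCountableTopology M
  isDiffeology : IsManifoldDiffeology (𝓡 d) DM

/-- The diffeological space `(M, DM)` is a smooth manifold. -/
def IsSmoothManifoldDiffeology {M : Type*} (DM : Diffeology' M) : Prop :=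
  Nonempty (ManifoldDiffeologyWitness M DM)

/-- A quasi-étale diffeological space: every point lies in the image of a quasi-étale
chart, i.e. a quasi-étale map from a smooth manifold. -/
def IsQuasiEtaleSpace {X : Type*} (DX : Diffeology' X) : Prop :=
  ∀ x : X, ∃ (M : Type) (DM : Diffeology' M) (π : M → X),
    IsSmoothManifoldDiffeology DM ∧ IsQuasiEtale DM DX π ∧ x ∈ Set.range π

/-! ## Fiber products and cartesian morphisms in QUED -/

/-- The diffeological fiber product `X ×_Z Y` of `p : X → Z` and `f : Y → Z`. -/
def fiberProductDiffeology (DX : Diffeology' X) (DY : Diffeology' Y) (p : X → Z)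
    (f : Y → Z) : Diffeology' {w : X × Y // p w.1 = f w.2} :=
  (DX.prod DY).subset {w | p w.1 = f w.2}

/-- `p : X → Z` is cartesian in the category QUED of quasi-étale diffeological spaces:
for every QUED morphism `f : Y → Z` the diffeological fiber product is again a
quasi-étale diffeological space (so it provides the fiber product in QUED; when it is
empty there is no commutative square over `p` and `f` in QUED). -/
def IsCartesianQUED (DX : Diffeology' X) {Z : Type*} (DZ : Diffeology' Z) (p : X → Z) : Prop :=
  ∀ (Y : Type) (DY : Diffeology' Y), IsQuasiEtaleSpace DY → ∀ f : Y → Z, DSmooth' DY DZ f →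
    IsQuasiEtaleSpace (fiberProductDiffeology DX DY p f)


/-! helpers -/

section Helpers

noncomputable section

/-- Chart-plot data around a point of a manifold-diffeological space. -/
structure CP (d : ℕ) {M : Type*} [TopologicalSpace M]
    [ChartedSpace (EuclideanSpace ℝ (Fin d)) M] (DM : Diffeology' M) (m : M) where
  U : Set (Fin d → ℝ)
  φ : (Fin d → ℝ) → M
  c : M → (Fin d → ℝ)
  S : Set M
  openU : IsOpen U
  openS : IsOpen S
  memU : c m ∈ U
  memS : m ∈ S
  plot : DM.IsPlot U φ
  smooth_c : ContMDiffOn (𝓡 d) 𝓘(ℝ, Fin d → ℝ) (⊤ : ℕ∞) c S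
  maps_φ : Set.MapsTo φ U S
  maps_c : Set.MapsTo c S U
  left_inv : ∀ u ∈ U, c (φ u) = u
  right_inv : ∀ z ∈ S, φ (c z) = z

namespace CP

variable {d : ℕ} {M : Type*} [TopologicalSpace M]
  [ChartedSpace (EuclideanSpace ℝ (Fin d)) M] {DM : Diffeology' M} {m : M}

theorem φ_c (p : CP d DM m) : p.φ (p.c m) = m := p.right_inv m p.memS

theorem injOn_φ (p : CP d DM m) : Set.InjOn p.φ p.U := fun a ha b hb h => by
  have := p.left_inv a ha; have h2 := p.left_inv b hb
  rw [← this, ← h2, h]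

theorem smooth_φ (hD : IsManifoldDiffeology (𝓡 d) DM) (p : CP d DM m) :
    ContMDiffOn 𝓘(ℝ, Fin d → ℝ) (𝓡 d) (⊤ : ℕ∞) p.φ p.U := ((hD p.U p.φ).1 p.plot).2

theorem continuousOn_φ (hD : IsManifoldDiffeology (𝓡 d) DM) (p : CP d DM m) :
    ContinuousOn p.φ p.U := (p.smooth_φ hD).continuousOn

theorem continuousOn_c (p : CP d DM m) : ContinuousOn p.c p.S := p.smooth_c.continuousOn

theorem image_eq (p : CP d DM m) {t : Set (Fin d → ℝ)} (ht : t ⊆ p.U) :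
    p.φ '' t = p.S ∩ p.c ⁻¹' t := by
  ext z
  constructor
  · rintro ⟨u, hu, rfl⟩
    exact ⟨p.maps_φ (ht hu), by rw [mem_preimage, p.left_inv u (ht hu)]; exact hu⟩
  · rintro ⟨hz, hz2⟩
    exact ⟨p.c z, hz2, p.right_inv z hz⟩

theorem image_open (p : CP d DM m) {t : Set (Fin d → ℝ)} (ht : IsOpen t) (hsub : t ⊆ p.U) :
    IsOpen (p.φ '' t) := by
  rw [p.image_eq hsub]
  exact p.continuousOn_c.isOpen_inter_preimage p.openS ht

end CP

variable {d : ℕ} {M : Type*} [TopologicalSpace M]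
  [ChartedSpace (EuclideanSpace ℝ (Fin d)) M] [IsManifold (𝓡 d) (⊤ : ℕ∞) M]
  {DM : Diffeology' M}

/-- Construction of chart-plot data at any point. -/
def mkCP (hD : IsManifoldDiffeology (𝓡 d) DM) (m : M) : CP d DM m := by
  classical
  let ch := chartAt (EuclideanSpace ℝ (Fin d)) m
  let e := EuclideanSpace.equiv (Fin d) ℝ
  refine
    { U := e '' ch.target
      φ := ch.symm ∘ e.symm
      c := e ∘ ch
      S := ch.source
      openU := e.toHomeomorph.isOpenMap _ ch.open_target
      openS := ch.open_source
      memU := ⟨ch m, ch.map_source (mem_chart_source _ m), rfl⟩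
      memS := mem_chart_source _ m
      plot := ?_
      smooth_c := (e.toContinuousLinearMap.contMDiff).comp_contMDiffOn contMDiffOn_chart
      maps_φ := ?_
      maps_c := fun z hz => ⟨ch z, ch.map_source hz, rfl⟩
      left_inv := ?_
      right_inv := ?_ }
  · rw [hD]
    refine ⟨e.toHomeomorph.isOpenMap _ ch.open_target, ?_⟩
    refine ContMDiffOn.comp (contMDiffOn_chart_symm (x := m))
      (e.symm.toContinuousLinearMap.contMDiff.contMDiffOn) ?_
    rintro u ⟨v, hv, rfl⟩
    simpa using hv
  · rintro u ⟨v, hv, rfl⟩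
    simpa using ch.map_target hv
  · rintro u ⟨v, hv, rfl⟩
    simp [ch.right_inv hv]
  · intro z hz
    simp [ch.left_inv hz]

theorem plot_iff (hD : IsManifoldDiffeology (𝓡 d) DM) {n : ℕ} {U : Set (Fin n → ℝ)}
    {φ : (Fin n → ℝ) → M} :
    DM.IsPlot U φ ↔ IsOpen U ∧ ContMDiffOn 𝓘(ℝ, Fin n → ℝ) (𝓡 d) (⊤ : ℕ∞) φ U := hD U φ

theorem plot_continuousOn (hD : IsManifoldDiffeology (𝓡 d) DM) {n : ℕ} {U : Set (Fin n → ℝ)}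
    {φ : (Fin n → ℝ) → M} (h : DM.IsPlot U φ) : ContinuousOn φ U :=
  ((plot_iff hD).1 h).2.continuousOn

theorem plot_mono (hD : IsManifoldDiffeology (𝓡 d) DM) {n : ℕ} {U V : Set (Fin n → ℝ)}
    {φ : (Fin n → ℝ) → M} (h : DM.IsPlot U φ) (hV : IsOpen V) (hsub : V ⊆ U) :
    DM.IsPlot V φ := by
  rw [plot_iff hD] at h ⊢
  exact ⟨hV, h.2.mono hsub⟩

end
end Helpers

section Helpers2
set_option linter.unusedSectionVars false

variable {d : ℕ} {M : Type*} [TopologicalSpace M]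
  [ChartedSpace (EuclideanSpace ℝ (Fin d)) M] [IsManifold (𝓡 d) (⊤ : ℕ∞) M]
  {DM : Diffeology' M}

theorem dOpen_iff (hD : IsManifoldDiffeology (𝓡 d) DM) {S : Set M} :
    DM.dOpen S ↔ IsOpen S := by
  constructor
  · intro h
    rw [isOpen_iff_forall_mem_open]
    intro m hm
    obtain p := mkCP hD m
    have h1 : IsOpen (p.U ∩ p.φ ⁻¹' S) := h p.plot
    refine ⟨p.φ '' (p.U ∩ p.φ ⁻¹' S), ?_, p.image_open h1 inter_subset_left, ?_⟩
    · rintro z ⟨u, hu, rfl⟩; exact hu.2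
    · exact ⟨p.c m, ⟨p.memU, by rw [mem_preimage, p.φ_c]; exact hm⟩, p.φ_c⟩
  · intro h n U φ hφ
    exact (plot_continuousOn hD hφ).isOpen_inter_preimage (DM.isOpen_of_isPlot hφ) h

variable {e : ℕ} {N : Type*} [TopologicalSpace N]
  [ChartedSpace (EuclideanSpace ℝ (Fin e)) N] [IsManifold (𝓡 e) (⊤ : ℕ∞) N]
  {DN : Diffeology' N}

theorem dsmoothOn_contMDiffOn (hD : IsManifoldDiffeology (𝓡 d) DM)
    (hE : IsManifoldDiffeology (𝓡 e) DN) {q : M → N} {s : Set M} (hs : IsOpen s)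
    (hq : DSmoothOn DM DN q s) : ContMDiffOn (𝓡 d) (𝓡 e) (⊤ : ℕ∞) q s := by
  intro z hz
  obtain p := mkCP hD z
  set t := p.U ∩ p.φ ⁻¹' s with ht
  have hto : IsOpen t := (p.continuousOn_φ hD).isOpen_inter_preimage p.openU hs
  have hct : p.c z ∈ t := ⟨p.memU, by rw [mem_preimage, p.φ_c]; exact hz⟩
  have hplot : DM.IsPlot t p.φ := plot_mono hD p.plot hto inter_subset_left
  have hmaps : Set.MapsTo p.φ t s := fun u hu => hu.2
  have hqφ : ContMDiffOn 𝓘(ℝ, Fin d → ℝ) (𝓡 e) (⊤ : ℕ∞) (q ∘ p.φ) t :=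
    ((plot_iff hE).1 (hq hplot hmaps)).2
  -- q = (q∘φ)∘c near z
  set s' := p.S ∩ p.c ⁻¹' t with hs'
  have hs'o : IsOpen s' := p.continuousOn_c.isOpen_inter_preimage p.openS hto
  have hzs' : z ∈ s' := ⟨p.memS, hct⟩
  have hcomp : ContMDiffOn (𝓡 d) (𝓡 e) (⊤ : ℕ∞) ((q ∘ p.φ) ∘ p.c) s' :=
    hqφ.comp (p.smooth_c.mono inter_subset_left) (fun w hw => hw.2)
  have heq : ∀ w ∈ s', q w = ((q ∘ p.φ) ∘ p.c) w := by
    intro w hw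
    simp only [Function.comp_apply]
    rw [p.right_inv w hw.1]
  exact ((hcomp.congr heq).contMDiffAt (hs'o.mem_nhds hzs')).contMDiffWithinAt

theorem contMDiffOn_dsmoothOn (hD : IsManifoldDiffeology (𝓡 d) DM)
    (hE : IsManifoldDiffeology (𝓡 e) DN) {q : M → N} {s : Set M}
    (hq : ContMDiffOn (𝓡 d) (𝓡 e) (⊤ : ℕ∞) q s) : DSmoothOn DM DN q s := by
  intro n U φ hφ hmaps
  rw [plot_iff hE]
  rw [plot_iff hD] at hφ
  exact ⟨hφ.1, hq.comp hφ.2 hmaps⟩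

end Helpers2

section IFT

noncomputable section
set_option linter.unusedSectionVars false

variable {E F : Type*} [NormedAddCommGroup E] [NormedSpace ℝ E]
  [NormedAddCommGroup F] [NormedSpace ℝ F] [FiniteDimensional ℝ E] [FiniteDimensional ℝ F]

/-- The continuous linear equivalence determined by a bijective continuous linear map. -/
def clmEquivOfBij (T : E →L[ℝ] F) (h : Function.Bijective T) : E ≃L[ℝ] F :=
  (LinearEquiv.ofBijective (T : E →ₗ[ℝ] F) h).toContinuousLinearEquiv

@[simp] theorem clmEquivOfBij_apply (T : E →L[ℝ] F) (h : Function.Bijective T) (x : E) :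
    clmEquivOfBij T h x = T x := rfl

theorem clmEquivOfBij_coe (T : E →L[ℝ] F) (h : Function.Bijective T) :
    (clmEquivOfBij T h : E →L[ℝ] F) = T := by ext x; rfl

theorem isUnit_clm_iff (T : E →L[ℝ] E) : IsUnit T ↔ Function.Bijective T := by
  constructor
  · rintro ⟨u, rfl⟩
    constructor
    · intro a b hab
      have h1 := congrArg (fun (S : E →L[ℝ] E) => S a) u.inv_mul
      have h2 := congrArg (fun (S : E →L[ℝ] E) => S b) u.inv_mul
      simp only [ContinuousLinearMap.mul_apply, ContinuousLinearMap.one_apply] at h1 h2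
      rw [← h1, ← h2, hab]
    · intro a
      refine ⟨u.inv a, ?_⟩
      have h1 := congrArg (fun (S : E →L[ℝ] E) => S a) u.mul_inv
      simp only [ContinuousLinearMap.mul_apply, ContinuousLinearMap.one_apply] at h1
      exact h1
  · intro h
    refine ⟨⟨T, (clmEquivOfBij T h).symm.toContinuousLinearMap, ?_, ?_⟩, rfl⟩
    · ext x
      simp only [ContinuousLinearMap.mul_apply, ContinuousLinearMap.one_apply,
        ContinuousLinearEquiv.coe_coe]
      have := (clmEquivOfBij T h).apply_symm_apply x
      rwa [clmEquivOfBij_apply] at this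
    · ext x
      simp only [ContinuousLinearMap.mul_apply, ContinuousLinearMap.one_apply,
        ContinuousLinearEquiv.coe_coe]
      have := (clmEquivOfBij T h).symm_apply_apply x
      rwa [clmEquivOfBij_apply] at this

/-- The set of points (within an open set where `f` is `C^∞`) where the derivative is
invertible is open. -/
theorem isOpen_bij_fderiv {f : E → F} {s : Set E} (hs : IsOpen s)
    (hf : ContDiffOn ℝ (⊤ : ℕ∞) f s) (e₀ : E ≃L[ℝ] F) :
    IsOpen {u ∈ s | Function.Bijective (fderiv ℝ f u)} := by
  have hderiv : ContinuousOn (fderiv ℝ f) s :=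
    hf.continuousOn_fderiv_of_isOpen hs (by exact_mod_cast le_top)
  have hmap : ContinuousOn (fun u => (ContinuousLinearMap.compL ℝ E F E
      e₀.symm.toContinuousLinearMap) (fderiv ℝ f u)) s :=
    (ContinuousLinearMap.compL ℝ E F E e₀.symm.toContinuousLinearMap).continuous.comp_continuousOn
      hderiv
  have key : {u ∈ s | Function.Bijective (fderiv ℝ f u)} =
      s ∩ (fun u => (ContinuousLinearMap.compL ℝ E F E e₀.symm.toContinuousLinearMap)
        (fderiv ℝ f u)) ⁻¹' {T : E →L[ℝ] E | IsUnit T} := by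
    ext u
    simp only [mem_setOf_eq, mem_inter_iff, mem_preimage]
    refine and_congr_right fun _ => ?_
    rw [isUnit_clm_iff]
    constructor
    · intro h
      exact (e₀.symm.bijective.comp h : Function.Bijective
        (fun x => e₀.symm (fderiv ℝ f u x)))
    · intro h
      have : ⇑(fderiv ℝ f u) = ⇑e₀ ∘ (fun x => e₀.symm (fderiv ℝ f u x)) := by
        ext x; simp
      rw [show ⇑(fderiv ℝ f u) = ⇑e₀ ∘ ⇑((ContinuousLinearMap.compL ℝ E F E
        e₀.symm.toContinuousLinearMap) (fderiv ℝ f u)) from by ext x; simp]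
      exact e₀.bijective.comp h
  rw [key]
  exact hmap.isOpen_inter_preimage hs Units.isOpen

/-- Smooth inverse function theorem packaged with an open neighbourhood on which a two-sided
smooth inverse exists. -/
theorem lemInv {f : E → F} {s : Set E} {a : E} (hs : IsOpen s)
    (hf : ContDiffOn ℝ (⊤ : ℕ∞) f s) (ha : a ∈ s)
    (hbij : Function.Bijective (fderiv ℝ f a)) :
    ∃ (s₀ : Set E) (t₀ : Set F) (g : F → E), IsOpen s₀ ∧ a ∈ s₀ ∧ s₀ ⊆ s ∧ IsOpen t₀ ∧
      Set.InjOn f s₀ ∧ f '' s₀ = t₀ ∧ ContDiffOn ℝ (⊤ : ℕ∞) g t₀ ∧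
      (∀ u ∈ s₀, g (f u) = u) ∧ (∀ v ∈ t₀, f (g v) = v) ∧ Set.MapsTo g t₀ s₀ := by
  classical
  have hfa : ContDiffAt ℝ (⊤ : ℕ∞) f a := hf.contDiffAt (hs.mem_nhds ha)
  have hdiff : DifferentiableAt ℝ f a :=
    hfa.differentiableAt (by simp)
  set e₀ : E ≃L[ℝ] F := clmEquivOfBij _ hbij with he₀
  have hfd : HasFDerivAt f (e₀ : E →L[ℝ] F) a := by
    rw [he₀, clmEquivOfBij_coe]
    exact hdiff.hasFDerivAt
  have h1n : ((⊤ : ℕ∞) : WithTop ℕ∞) ≠ 0 := by simp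
  set Ψ := hfa.toOpenPartialHomeomorph f hfd h1n with hΨ
  have hΨcoe : (Ψ : E → F) = f := rfl
  have haΨ : a ∈ Ψ.source := hfa.mem_toOpenPartialHomeomorph_source hfd h1n
  set Good := {u ∈ s | Function.Bijective (fderiv ℝ f u)} with hGood
  have hGoodOpen : IsOpen Good := isOpen_bij_fderiv hs hf e₀
  set s₀ := Ψ.source ∩ Good with hs₀
  have hs₀o : IsOpen s₀ := Ψ.open_source.inter hGoodOpen
  have has₀ : a ∈ s₀ := ⟨haΨ, ha, hbij⟩
  have hs₀s : s₀ ⊆ s := fun u hu => hu.2.1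
  set t₀ := Ψ '' s₀ with ht₀
  have ht₀o : IsOpen t₀ := Ψ.isOpen_image_of_subset_source hs₀o inter_subset_left
  refine ⟨s₀, t₀, Ψ.symm, hs₀o, has₀, hs₀s, ht₀o, ?_, ?_, ?_, ?_, ?_, ?_⟩
  · exact fun u hu v hv huv => Ψ.injOn hu.1 hv.1 (by rw [hΨcoe]; exact huv)
  · rw [ht₀, hΨcoe]
  · -- smoothness of the inverse
    intro v hv
    obtain ⟨u, hu, rfl⟩ := hv
    have huT : Ψ u ∈ Ψ.target := Ψ.map_source hu.1
    have hsymm : Ψ.symm (Ψ u) = u := Ψ.left_inv hu.1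
    have hubij : Function.Bijective (fderiv ℝ f u) := hu.2.2
    set eu : E ≃L[ℝ] F := clmEquivOfBij _ hubij with heu
    have hfu : ContDiffAt ℝ (⊤ : ℕ∞) f u := hf.contDiffAt (hs.mem_nhds hu.2.1)
    have hfdu : HasFDerivAt f (eu : E →L[ℝ] F) u := by
      rw [heu, clmEquivOfBij_coe]
      exact (hfu.differentiableAt (by simp)).hasFDerivAt
    have : ContDiffAt ℝ (⊤ : ℕ∞) (Ψ.symm) (Ψ u) := by
      refine Ψ.contDiffAt_symm (f₀' := eu) huT ?_ ?_
      · rw [hsymm, hΨcoe]; exact hfdu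
      · rw [hsymm, hΨcoe]; exact hfu
    exact this.contDiffWithinAt
  · intro u hu; rw [← hΨcoe]; exact Ψ.left_inv hu.1
  · rintro v ⟨u, hu, rfl⟩
    rw [← hΨcoe, Ψ.left_inv hu.1]
  · rintro v ⟨u, hu, rfl⟩
    rw [Ψ.left_inv hu.1]; exact hu

end
end IFT


section LemB
set_option linter.unusedSectionVars false
set_option maxHeartbeats 1000000

/-- If a chart plot of `M` factors through a map `P` to `ℝᵉ` over `π`, the fibers of `π`
are totally disconnected, and `P` has surjective differential at a point, then the
differential is also injective there. -/
theorem lemB {d e : ℕ} {M X : Type*} [TopologicalSpace M]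
    [ChartedSpace (EuclideanSpace ℝ (Fin d)) M] [IsManifold (𝓡 d) (⊤ : ℕ∞) M]
    {DM : Diffeology' M} (hD : IsManifoldDiffeology (𝓡 d) DM)
    {π : M → X} {U' : Set (Fin d → ℝ)} {φ' : (Fin d → ℝ) → M} {u₀ : Fin d → ℝ}
    (hplot : DM.IsPlot U' φ') (hinj : Set.InjOn φ' U') (hu₀ : u₀ ∈ U')
    {P : (Fin d → ℝ) → (Fin e → ℝ)} (hP : ContDiffOn ℝ (⊤ : ℕ∞) P U')
    {ξ : (Fin e → ℝ) → X} (hfac : ∀ u ∈ U', π (φ' u) = ξ (P u))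
    (hTD : TotallyDisconnectedIn DM (π ⁻¹' {π (φ' u₀)}))
    (hsurj : Function.Surjective (fderiv ℝ P u₀)) :
    Function.Injective (fderiv ℝ P u₀) := by
  classical
  have hU' : IsOpen U' := DM.isOpen_of_isPlot hplot
  set T := fderiv ℝ P u₀ with hT
  rw [injective_iff_map_eq_zero]
  by_contra hcon
  push_neg at hcon
  obtain ⟨v, hTv, hv0⟩ := hcon
  set K := LinearMap.ker (T : (Fin d → ℝ) →ₗ[ℝ] (Fin e → ℝ)) with hK
  have hvK : v ∈ K := by simpa [hK, LinearMap.mem_ker] using hTv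
  obtain ⟨C, hC⟩ := Submodule.exists_isCompl K
  set projK : (Fin d → ℝ) →ₗ[ℝ] K := K.linearProjOfIsCompl C hC with hproj
  set Φ : (Fin d → ℝ) → (Fin e → ℝ) × K := fun u => (P u, projK u) with hΦdef
  set T' : (Fin d → ℝ) →L[ℝ] (Fin e → ℝ) × K :=
    T.prod projK.toContinuousLinearMap with hT'
  -- T' is bijective
  have hT'bij : Function.Bijective T' := by
    constructor
    · intro a b hab
      have h1 : T a = T b ∧ projK a = projK b := by
        have := hab
        simp only [hT', ContinuousLinearMap.prod_apply, Prod.mk.injEq,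
          LinearMap.coe_toContinuousLinearMap'] at this
        exact this
      have hmem : a - b ∈ K := by
        simp only [hK, LinearMap.mem_ker, map_sub, ContinuousLinearMap.coe_coe]
        rw [h1.1, sub_self]
      have hps : projK (a - b) = ⟨a - b, hmem⟩ := by
        exact Submodule.linearProjOfIsCompl_apply_left hC ⟨a - b, hmem⟩
      have : projK (a - b) = 0 := by rw [map_sub, h1.2, sub_self]
      rw [hps] at this
      have : a - b = (0 : (Fin d → ℝ)) := by
        simpa [Submodule.mk_eq_zero] using congrArg Subtype.val this
      exact sub_eq_zero.mp this
    · rintro ⟨y, k⟩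
      obtain ⟨u₁, hu₁⟩ := hsurj y
      refine ⟨u₁ - (projK u₁ : (Fin d → ℝ)) + (k : (Fin d → ℝ)), ?_⟩
      have hTk : T (k : (Fin d → ℝ)) = 0 := k.2
      have hTp : T ((projK u₁ : K) : (Fin d → ℝ)) = 0 := (projK u₁).2
      have hpk : projK ((k : K) : (Fin d → ℝ)) = k :=
        Submodule.linearProjOfIsCompl_apply_left hC k
      have hpp : projK ((projK u₁ : K) : (Fin d → ℝ)) = projK u₁ :=
        Submodule.linearProjOfIsCompl_apply_left hC (projK u₁)
      simp only [hT', ContinuousLinearMap.prod_apply,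
        LinearMap.coe_toContinuousLinearMap', Prod.mk.injEq]
      constructor
      · rw [map_add, map_sub]
        rw [hu₁, hTk, hTp]
        simp
      · rw [map_add, map_sub, hpk, hpp]
        abel
  -- Φ is C^∞ with derivative T' at u₀
  have hΦsm : ContDiffOn ℝ (⊤ : ℕ∞) Φ U' := by
    refine hP.prodMk ?_
    exact (projK.toContinuousLinearMap.contDiff).contDiffOn
  have hPd : HasFDerivAt P T u₀ :=
    ((hP.contDiffAt (hU'.mem_nhds hu₀)).differentiableAt
      (by simp)).hasFDerivAt
  have hΦd : HasFDerivAt Φ T' u₀ :=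
    hPd.prodMk (projK.toContinuousLinearMap.hasFDerivAt)
  have hΦbij : Function.Bijective (fderiv ℝ Φ u₀) := by
    rw [hΦd.fderiv]; exact hT'bij
  -- inverse function theorem for Φ
  obtain ⟨s₀, t₀, g, hs₀o, hu₀s₀, hs₀U, ht₀o, hinjΦ, himg, hg, hgl, hgr, hgmaps⟩ :=
    lemInv hU' hΦsm hu₀ hΦbij
  set vK : K := ⟨v, hvK⟩ with hvK'
  have hvK0 : vK ≠ 0 := by
    intro h
    apply hv0
    simpa [hvK'] using congrArg Subtype.val h
  set k₀ : K := projK u₀ with hk₀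
  -- the curve in the fiber
  set ℓ : (Fin 1 → ℝ) → (Fin e → ℝ) × K := fun t => (P u₀, k₀ + t 0 • vK) with hℓ
  have hℓcont : Continuous ℓ := by
    refine continuous_const.prodMk ?_
    exact continuous_const.add ((continuous_apply 0).smul continuous_const)
  have hℓsm : ContDiff ℝ (⊤ : ℕ∞) ℓ := by
    have h0 : ContDiff ℝ ((⊤ : ℕ∞) : WithTop ℕ∞) (fun t : Fin 1 → ℝ => t 0) :=
      (ContinuousLinearMap.proj (R := ℝ) (φ := fun _ : Fin 1 => ℝ) 0).contDiff
    exact contDiff_const.prodMk (contDiff_const.add (h0.smul contDiff_const))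
  set W : Set (Fin 1 → ℝ) := ℓ ⁻¹' t₀ with hW
  have hWo : IsOpen W := ht₀o.preimage hℓcont
  have hΦu₀ : Φ u₀ = (P u₀, k₀) := rfl
  have h0W : (0 : Fin 1 → ℝ) ∈ W := by
    have : ℓ 0 = Φ u₀ := by simp [hℓ, hΦu₀]
    rw [hW, mem_preimage, this, ← himg]
    exact ⟨u₀, hu₀s₀, rfl⟩
  set δ : (Fin 1 → ℝ) → M := fun t => φ' (g (ℓ t)) with hδ
  have hgℓU' : ∀ t ∈ W, g (ℓ t) ∈ s₀ := fun t ht => hgmaps ht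
  have hδplot : DM.IsPlot W δ := by
    rw [plot_iff hD]
    refine ⟨hWo, ?_⟩
    have h1 : ContDiffOn ℝ (⊤ : ℕ∞) (g ∘ ℓ) W :=
      hg.comp hℓsm.contDiffOn (fun t ht => ht)
    have h2 : ContMDiffOn 𝓘(ℝ, Fin 1 → ℝ) 𝓘(ℝ, Fin d → ℝ) (⊤ : ℕ∞) (g ∘ ℓ) W :=
      h1.contMDiffOn
    refine ContMDiffOn.comp (I' := 𝓘(ℝ, Fin d → ℝ))
      (((plot_iff hD).1 hplot).2) h2 ?_
    intro t ht
    exact hs₀U (hgℓU' t ht)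
  have hδmaps : Set.MapsTo δ W (π ⁻¹' {π (φ' u₀)}) := by
    intro t ht
    have hgs : g (ℓ t) ∈ s₀ := hgℓU' t ht
    have hΦg : Φ (g (ℓ t)) = ℓ t := hgr _ ht
    have hPg : P (g (ℓ t)) = P u₀ := by
      have := congrArg Prod.fst hΦg
      simpa [hΦdef, hℓ] using this
    simp only [mem_preimage, mem_singleton_iff, hδ]
    rw [hfac _ (hs₀U hgs), hPg, ← hfac _ hu₀]
  obtain ⟨V, hVW, hVo, h0V, hVconst⟩ := hTD hδplot hδmaps 0 h0W
  -- find a small nonzero parameter in V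
  have : ∃ ε > 0, ∀ t : Fin 1 → ℝ, dist t 0 < ε → t ∈ V := by
    rw [Metric.isOpen_iff] at hVo
    obtain ⟨ε, hε, hball⟩ := hVo 0 h0V
    exact ⟨ε, hε, fun t ht => hball (Metric.mem_ball.2 ht)⟩
  obtain ⟨ε, hε, hball⟩ := this
  set t₁ : Fin 1 → ℝ := fun _ => ε / 2 with ht₁
  have ht₁V : t₁ ∈ V := by
    refine hball _ ?_
    have hd : dist t₁ (0 : Fin 1 → ℝ) ≤ ε / 2 := by
      rw [dist_pi_le_iff (half_pos hε).le]
      intro i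
      have h5 : dist (t₁ i) ((0 : Fin 1 → ℝ) i) = ε / 2 := by
        simp [ht₁, Real.dist_eq, abs_of_pos hε]
      exact le_of_eq h5
    linarith

  have heq := hVconst t₁ ht₁V
  -- δ t₁ = δ 0 forces (ε/2) • vK = 0
  have h1 : g (ℓ t₁) = g (ℓ 0) := by
    apply hinj (hs₀U (hgℓU' _ (hVW ht₁V))) (hs₀U (hgℓU' _ (hVW h0V)))
    exact heq
  have h2 : ℓ t₁ = ℓ 0 := by
    rw [← hgr _ (hVW ht₁V : t₁ ∈ W), ← hgr _ (hVW h0V : (0 : Fin 1 → ℝ) ∈ W), h1]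
  have h3 : k₀ + (ε / 2) • vK = k₀ + (0 : Fin 1 → ℝ) 0 • vK := by
    have := congrArg Prod.snd h2
    simpa [hℓ, ht₁] using this
  have h4 : (ε / 2) • vK = 0 := by
    have h3' : k₀ + (ε / 2) • vK = k₀ := by
      simpa using h3
    rwa [add_eq_left] at h3'
  have : vK = 0 := by
    have hne : (ε / 2 : ℝ) ≠ 0 := by positivity
    exact (smul_eq_zero.mp h4).resolve_left hne
  exact hvK0 this

end LemB

set_option maxHeartbeats 2000000 in
/-- If `X` is a quasi-étale diffeological space and `π : M → X` is a
local subduction from a smooth manifold with totally disconnected fibers, then `π` is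
automatically quasi-étale (in particular the rigidity property (QE3) holds). -/
theorem statement9 {X M : Type} (DX : Diffeology' X) (hX : IsQuasiEtaleSpace DX)
    (DM : Diffeology' M) (hM : IsSmoothManifoldDiffeology DM)
    (π : M → X) (hsub : IsLocalSubduction DM DX π)
    (hTD : ∀ x : X, TotallyDisconnectedIn DM (π ⁻¹' {x})) :
    IsQuasiEtale DM DX π := by
  classical
  refine ⟨hsub, hTD, ?_⟩
  intro O f hO hf hπf x hxO
  obtain ⟨wM⟩ := hM
  obtain ⟨d, hsmM, ht2M, hscM, hD⟩ := wM
  have h1top : ((⊤ : ℕ∞) : WithTop ℕ∞) ≠ 0 := by simp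
  have hOopen : IsOpen O := (dOpen_iff hD).1 hO
  have hfsm : ContMDiffOn (𝓡 d) (𝓡 d) (⊤ : ℕ∞) f O := dsmoothOn_contMDiffOn hD hD hOopen hf
  have hfx : π (f x) = π x := hπf x hxO
  obtain ⟨N, DN, σ, hNman, hQE, n₀, hn₀⟩ := hX (π x)
  obtain ⟨wN⟩ := hNman
  obtain ⟨e, hsmN, ht2N, hscN, hE⟩ := wN
  obtain ⟨hσsub, hσTD, hσQE3⟩ := hQE
  -- chart data
  obtain cpx := mkCP hD x
  obtain cpf := mkCP hD (f x)
  obtain cpn := mkCP hE n₀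
  -- lift π ∘ cpf.φ along σ through n₀
  have hπφf : DX.IsPlot cpf.U (π ∘ cpf.φ) := hsub.1 cpf.plot
  have hσn₀ : σ n₀ = (π ∘ cpf.φ) (cpf.c (f x)) := by
    rw [Function.comp_apply, cpf.φ_c, hfx, hn₀]
  obtain ⟨V', hV'sub, hV'o, hufV', ψ', hψ'plot, hψ'uf, hψ'eq⟩ :=
    hσsub.2 hπφf (cpf.c (f x)) cpf.memU n₀ hσn₀
  -- lift σ ∘ cpn.φ along π through x
  have hσφn : DX.IsPlot cpn.U (σ ∘ cpn.φ) := hσsub.1 cpn.plot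
  have hπx : π x = (σ ∘ cpn.φ) (cpn.c n₀) := by
    rw [Function.comp_apply, cpn.φ_c, hn₀]
  obtain ⟨VN, hVNsub, hVNo, hv₀VN, χ, hχplot, hχv₀, hχeq⟩ :=
    hsub.2 hσφn (cpn.c n₀) cpn.memU x hπx
  -- open sets
  have hinnero : IsOpen (cpf.S ∩ cpf.c ⁻¹' V') :=
    cpf.continuousOn_c.isOpen_inter_preimage cpf.openS hV'o
  have hSMo : IsOpen (O ∩ f ⁻¹' (cpf.S ∩ cpf.c ⁻¹' V')) :=
    hfsm.continuousOn.isOpen_inter_preimage hOopen hinnero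
  have hxSM : x ∈ O ∩ f ⁻¹' (cpf.S ∩ cpf.c ⁻¹' V') :=
    ⟨hxO, cpf.memS, hufV'⟩
  have hW₁o : IsOpen (VN ∩ χ ⁻¹' (O ∩ f ⁻¹' (cpf.S ∩ cpf.c ⁻¹' V'))) :=
    (plot_continuousOn hD hχplot).isOpen_inter_preimage hVNo hSMo
  have hv₀W₁ : cpn.c n₀ ∈ VN ∩ χ ⁻¹' (O ∩ f ⁻¹' (cpf.S ∩ cpf.c ⁻¹' V')) :=
    ⟨hv₀VN, by rw [mem_preimage, hχv₀]; exact hxSM⟩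
  set W₁ := VN ∩ χ ⁻¹' (O ∩ f ⁻¹' (cpf.S ∩ cpf.c ⁻¹' V')) with hW₁def
  have hO'o : IsOpen (cpn.S ∩ cpn.c ⁻¹' W₁) :=
    cpn.continuousOn_c.isOpen_inter_preimage cpn.openS hW₁o
  have hn₀O' : n₀ ∈ cpn.S ∩ cpn.c ⁻¹' W₁ := ⟨cpn.memS, hv₀W₁⟩
  set O' := cpn.S ∩ cpn.c ⁻¹' W₁ with hO'def
  -- the self-map of N over σ
  set H : N → N := fun z => ψ' (cpf.c (f (χ (cpn.c z)))) with hHdef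
  have hχsm : ContMDiffOn 𝓘(ℝ, Fin e → ℝ) (𝓡 d) (⊤ : ℕ∞) χ VN := ((plot_iff hD).1 hχplot).2
  have hψ'sm : ContMDiffOn 𝓘(ℝ, Fin d → ℝ) (𝓡 e) (⊤ : ℕ∞) ψ' V' := ((plot_iff hE).1 hψ'plot).2
  -- domain chasing for H
  have hO'chase : ∀ z ∈ O', cpn.c z ∈ W₁ ∧ χ (cpn.c z) ∈ O ∧
      f (χ (cpn.c z)) ∈ cpf.S ∧ cpf.c (f (χ (cpn.c z))) ∈ V' := by
    intro z hz
    exact ⟨hz.2, hz.2.2.1, hz.2.2.2.1, hz.2.2.2.2⟩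
  have hHsm : ContMDiffOn (𝓡 e) (𝓡 e) (⊤ : ℕ∞) H O' := by
    have h1 : ContMDiffOn (𝓡 e) 𝓘(ℝ, Fin e → ℝ) (⊤ : ℕ∞) cpn.c O' :=
      cpn.smooth_c.mono inter_subset_left
    have h2 : ContMDiffOn (𝓡 e) (𝓡 d) (⊤ : ℕ∞) (χ ∘ cpn.c) O' :=
      hχsm.comp h1 (fun z hz => (hO'chase z hz).1.1)
    have h3 : ContMDiffOn (𝓡 e) (𝓡 d) (⊤ : ℕ∞) (f ∘ (χ ∘ cpn.c)) O' :=
      hfsm.comp h2 (fun z hz => (hO'chase z hz).2.1)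
    have h4 : ContMDiffOn (𝓡 e) 𝓘(ℝ, Fin d → ℝ) (⊤ : ℕ∞) (cpf.c ∘ (f ∘ (χ ∘ cpn.c))) O' :=
      cpf.smooth_c.comp h3 (fun z hz => (hO'chase z hz).2.2.1)
    have h5 : ContMDiffOn (𝓡 e) (𝓡 e) (⊤ : ℕ∞) (ψ' ∘ (cpf.c ∘ (f ∘ (χ ∘ cpn.c)))) O' :=
      hψ'sm.comp h4 (fun z hz => (hO'chase z hz).2.2.2)
    exact h5
  have hσH : ∀ z ∈ O', σ (H z) = σ z := by
    intro z hz
    obtain ⟨h1, h2, h3, h4⟩ := hO'chase z hz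
    calc σ (H z) = (σ ∘ ψ') (cpf.c (f (χ (cpn.c z)))) := rfl
      _ = (π ∘ cpf.φ) (cpf.c (f (χ (cpn.c z)))) := hψ'eq h4
      _ = π (f (χ (cpn.c z))) := by
            rw [Function.comp_apply, cpf.right_inv _ h3]
      _ = π (χ (cpn.c z)) := hπf _ h2
      _ = (σ ∘ cpn.φ) (cpn.c z) := hχeq h1.1
      _ = σ z := by rw [Function.comp_apply, cpn.right_inv z hz.1]
  have hHn₀ : H n₀ = n₀ := by
    show ψ' (cpf.c (f (χ (cpn.c n₀)))) = n₀
    rw [hχv₀, hψ'uf]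
  -- apply rigidity of σ
  obtain ⟨VH, hVHO', hVHdo, hn₀VH, hHVHdo, hHinj, gH, hgHds, hgHinv⟩ :=
    hσQE3 O' H ((dOpen_iff hE).2 hO'o) (contMDiffOn_dsmoothOn hE hE hHsm) hσH n₀ hn₀O'
  have hVHo : IsOpen VH := (dOpen_iff hE).1 hVHdo
  have hHVHo : IsOpen (H '' VH) := (dOpen_iff hE).1 hHVHdo
  have hgHsm : ContMDiffOn (𝓡 e) (𝓡 e) (⊤ : ℕ∞) gH (H '' VH) :=
    dsmoothOn_contMDiffOn hE hE hHVHo hgHds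
  have hHgH : ∀ w ∈ H '' VH, H (gH w) = w := by
    rintro w ⟨zz, hzz, rfl⟩; rw [hgHinv zz hzz]
  -- a good open set for the two-sided inverse
  have hHcont : ContinuousOn H VH := (hHsm.mono hVHO').continuousOn
  set V₂ := (VH ∩ H ⁻¹' cpn.S) ∩ cpn.S with hV₂def
  have hV₂o : IsOpen V₂ :=
    (hHcont.isOpen_inter_preimage hVHo cpn.openS).inter cpn.openS
  have hn₀V₂ : n₀ ∈ V₂ := ⟨⟨hn₀VH, by rw [mem_preimage, hHn₀]; exact cpn.memS⟩, cpn.memS⟩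
  have hV₂VH : V₂ ⊆ VH := fun z hz => hz.1.1
  have himg2 : H '' V₂ = (H '' VH) ∩ gH ⁻¹' V₂ := by
    ext w
    constructor
    · rintro ⟨z, hz, rfl⟩
      exact ⟨⟨z, hz.1.1, rfl⟩, by rw [mem_preimage, hgHinv z hz.1.1]; exact hz⟩
    · rintro ⟨⟨z, hz, rfl⟩, hw⟩
      rw [mem_preimage, hgHinv z hz] at hw
      exact ⟨z, hw, rfl⟩
  have hHV₂o : IsOpen (H '' V₂) := by
    rw [himg2]
    exact hgHsm.continuousOn.isOpen_inter_preimage hHVHo hV₂o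
  -- Euclidean versions
  set A : (Fin e → ℝ) → (Fin e → ℝ) := fun v => cpn.c (H (cpn.φ v)) with hAdef
  set B : (Fin e → ℝ) → (Fin e → ℝ) := fun v => cpn.c (gH (cpn.φ v)) with hBdef
  set sA := cpn.U ∩ cpn.φ ⁻¹' V₂ with hsAdef
  have hsAo : IsOpen sA := (cpn.continuousOn_φ hE).isOpen_inter_preimage cpn.openU hV₂o
  have hv₀sA : cpn.c n₀ ∈ sA :=
    ⟨cpn.memU, by rw [mem_preimage, cpn.φ_c]; exact hn₀V₂⟩
  set sB := cpn.U ∩ cpn.φ ⁻¹' (H '' V₂) with hsBdef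
  have hsBo : IsOpen sB := (cpn.continuousOn_φ hE).isOpen_inter_preimage cpn.openU hHV₂o
  have hv₀sB : cpn.c n₀ ∈ sB :=
    ⟨cpn.memU, by rw [mem_preimage, cpn.φ_c]; exact ⟨n₀, hn₀V₂, hHn₀⟩⟩
  have hBA : ∀ v ∈ sA, B (A v) = v := by
    intro v hv
    have hφv : cpn.φ v ∈ V₂ := hv.2
    have h1 : H (cpn.φ v) ∈ cpn.S := hφv.1.2
    show cpn.c (gH (cpn.φ (cpn.c (H (cpn.φ v))))) = v
    rw [cpn.right_inv _ h1, hgHinv _ hφv.1.1, cpn.left_inv v hv.1]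
  have hAB : ∀ v ∈ sB, A (B v) = v := by
    intro v hv
    obtain ⟨z, hz, hφv⟩ := hv.2
    have h1 : gH (cpn.φ v) = z := by rw [← hφv, hgHinv z hz.1.1]
    show cpn.c (H (cpn.φ (cpn.c (gH (cpn.φ v))))) = v
    rw [h1, cpn.right_inv z hz.2, hφv, cpn.left_inv v hv.1]
  have hAv₀ : A (cpn.c n₀) = cpn.c n₀ := by
    show cpn.c (H (cpn.φ (cpn.c n₀))) = cpn.c n₀
    rw [cpn.φ_c, hHn₀]
  have hAsm : ContDiffOn ℝ (⊤ : ℕ∞) A sA := by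
    have h1 : ContMDiffOn 𝓘(ℝ, Fin e → ℝ) (𝓡 e) (⊤ : ℕ∞) cpn.φ sA :=
      (cpn.smooth_φ hE).mono inter_subset_left
    have h2 : ContMDiffOn 𝓘(ℝ, Fin e → ℝ) (𝓡 e) (⊤ : ℕ∞) (H ∘ cpn.φ) sA :=
      (hHsm.mono hVHO').comp h1 (fun v hv => hV₂VH hv.2)
    have h3 : ContMDiffOn 𝓘(ℝ, Fin e → ℝ) 𝓘(ℝ, Fin e → ℝ) (⊤ : ℕ∞) (cpn.c ∘ (H ∘ cpn.φ)) sA :=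
      cpn.smooth_c.comp h2 (fun v hv => hv.2.1.2)
    exact h3.contDiffOn
  have hBsm : ContDiffOn ℝ (⊤ : ℕ∞) B sB := by
    have h1 : ContMDiffOn 𝓘(ℝ, Fin e → ℝ) (𝓡 e) (⊤ : ℕ∞) cpn.φ sB :=
      (cpn.smooth_φ hE).mono inter_subset_left
    have h2 : ContMDiffOn 𝓘(ℝ, Fin e → ℝ) (𝓡 e) (⊤ : ℕ∞) (gH ∘ cpn.φ) sB := by
      refine hgHsm.comp h1 ?_
      rintro v hv
      obtain ⟨z, hz, hφv⟩ := hv.2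
      rw [mem_preimage, ← hφv]
      exact ⟨z, hz.1.1, rfl⟩
    have h3 : ContMDiffOn 𝓘(ℝ, Fin e → ℝ) 𝓘(ℝ, Fin e → ℝ) (⊤ : ℕ∞) (cpn.c ∘ (gH ∘ cpn.φ)) sB := by
      refine cpn.smooth_c.comp h2 ?_
      rintro v hv
      obtain ⟨z, hz, hφv⟩ := hv.2
      have : gH (cpn.φ v) = z := by rw [← hφv, hgHinv z hz.1.1]
      rw [mem_preimage]
      show gH (cpn.φ v) ∈ cpn.S
      rw [this]; exact hz.2
    exact h3.contDiffOn
  -- the derivative of A at v₀ is bijective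
  have hAd : DifferentiableAt ℝ A (cpn.c n₀) :=
    (hAsm.contDiffAt (hsAo.mem_nhds hv₀sA)).differentiableAt h1top
  have hBd : DifferentiableAt ℝ B (cpn.c n₀) :=
    (hBsm.contDiffAt (hsBo.mem_nhds hv₀sB)).differentiableAt h1top
  have hcompBA : (fderiv ℝ B (cpn.c n₀)).comp (fderiv ℝ A (cpn.c n₀)) =
      ContinuousLinearMap.id ℝ (Fin e → ℝ) := by
    have h1 : HasFDerivAt (B ∘ A)
        ((fderiv ℝ B (cpn.c n₀)).comp (fderiv ℝ A (cpn.c n₀))) (cpn.c n₀) := by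
      have hb : HasFDerivAt B (fderiv ℝ B (cpn.c n₀)) (A (cpn.c n₀)) := by
        rw [hAv₀]; exact hBd.hasFDerivAt
      exact hb.comp _ hAd.hasFDerivAt
    have h2 : HasFDerivAt (B ∘ A) (ContinuousLinearMap.id ℝ (Fin e → ℝ)) (cpn.c n₀) := by
      refine (hasFDerivAt_id _).congr_of_eventuallyEq ?_
      filter_upwards [hsAo.mem_nhds hv₀sA] with v hv
      exact hBA v hv
    exact h1.unique h2
  have hBv₀ : B (cpn.c n₀) = cpn.c n₀ := by
    show cpn.c (gH (cpn.φ (cpn.c n₀))) = cpn.c n₀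
    rw [cpn.φ_c]
    have : gH n₀ = n₀ := by
      have := hgHinv n₀ hn₀VH
      rwa [hHn₀] at this
    rw [this]
  have hcompAB : (fderiv ℝ A (cpn.c n₀)).comp (fderiv ℝ B (cpn.c n₀)) =
      ContinuousLinearMap.id ℝ (Fin e → ℝ) := by
    have h1 : HasFDerivAt (A ∘ B)
        ((fderiv ℝ A (cpn.c n₀)).comp (fderiv ℝ B (cpn.c n₀))) (cpn.c n₀) := by
      have ha : HasFDerivAt A (fderiv ℝ A (cpn.c n₀)) (B (cpn.c n₀)) := by
        rw [hBv₀]; exact hAd.hasFDerivAt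
      exact ha.comp _ hBd.hasFDerivAt
    have h2 : HasFDerivAt (A ∘ B) (ContinuousLinearMap.id ℝ (Fin e → ℝ)) (cpn.c n₀) := by
      refine (hasFDerivAt_id _).congr_of_eventuallyEq ?_
      filter_upwards [hsBo.mem_nhds hv₀sB] with v hv
      exact hAB v hv
    exact h1.unique h2
  have hAbij : Function.Bijective (fderiv ℝ A (cpn.c n₀)) := by
    constructor
    · intro a b hab
      have h1 := congrArg (fun T : (Fin e → ℝ) →L[ℝ] (Fin e → ℝ) => T a) hcompBA
      have h2 := congrArg (fun T : (Fin e → ℝ) →L[ℝ] (Fin e → ℝ) => T b) hcompBA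
      simp only [ContinuousLinearMap.coe_comp', Function.comp_apply,
        ContinuousLinearMap.coe_id', id_eq] at h1 h2
      rw [← h1, ← h2, hab]
    · intro a
      refine ⟨fderiv ℝ B (cpn.c n₀) a, ?_⟩
      have h1 := congrArg (fun T : (Fin e → ℝ) →L[ℝ] (Fin e → ℝ) => T a) hcompAB
      simpa only [ContinuousLinearMap.coe_comp', Function.comp_apply,
        ContinuousLinearMap.coe_id', id_eq] using h1
  -- decompose A = P ∘ Q near v₀
  set P : (Fin d → ℝ) → (Fin e → ℝ) := fun u => cpn.c (ψ' u) with hPdef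
  set Q : (Fin e → ℝ) → (Fin d → ℝ) := fun v => cpf.c (f (χ v)) with hQdef
  set V'₂ := V' ∩ ψ' ⁻¹' cpn.S with hV'₂def
  have hV'₂o : IsOpen V'₂ :=
    (plot_continuousOn hE hψ'plot).isOpen_inter_preimage hV'o cpn.openS
  have hufV'₂ : cpf.c (f x) ∈ V'₂ :=
    ⟨hufV', by rw [mem_preimage, hψ'uf]; exact cpn.memS⟩
  have hPsm : ContDiffOn ℝ (⊤ : ℕ∞) P V'₂ := by
    have h1 : ContMDiffOn 𝓘(ℝ, Fin d → ℝ) (𝓡 e) (⊤ : ℕ∞) ψ' V'₂ := hψ'sm.mono inter_subset_left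
    have h2 : ContMDiffOn 𝓘(ℝ, Fin d → ℝ) 𝓘(ℝ, Fin e → ℝ) (⊤ : ℕ∞) (cpn.c ∘ ψ') V'₂ :=
      cpn.smooth_c.comp h1 (fun u hu => hu.2)
    exact h2.contDiffOn
  have hQsm : ContDiffOn ℝ (⊤ : ℕ∞) Q W₁ := by
    have h1 : ContMDiffOn 𝓘(ℝ, Fin e → ℝ) (𝓡 d) (⊤ : ℕ∞) χ W₁ := hχsm.mono inter_subset_left
    have h2 : ContMDiffOn 𝓘(ℝ, Fin e → ℝ) (𝓡 d) (⊤ : ℕ∞) (f ∘ χ) W₁ :=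
      hfsm.comp h1 (fun v hv => hv.2.1)
    have h3 : ContMDiffOn 𝓘(ℝ, Fin e → ℝ) 𝓘(ℝ, Fin d → ℝ) (⊤ : ℕ∞) (cpf.c ∘ (f ∘ χ)) W₁ :=
      cpf.smooth_c.comp h2 (fun v hv => hv.2.2.1)
    exact h3.contDiffOn
  have hQv₀ : Q (cpn.c n₀) = cpf.c (f x) := by
    show cpf.c (f (χ (cpn.c n₀))) = cpf.c (f x)
    rw [hχv₀]
  have hAPQ : Set.EqOn A (P ∘ Q) sA := by
    intro v hv
    show cpn.c (H (cpn.φ v)) = cpn.c (ψ' (Q v))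
    have : cpn.c (cpn.φ v) = v := cpn.left_inv v hv.1
    show cpn.c (ψ' (cpf.c (f (χ (cpn.c (cpn.φ v)))))) = cpn.c (ψ' (cpf.c (f (χ v))))
    rw [this]
  have hQd : HasFDerivAt Q (fderiv ℝ Q (cpn.c n₀)) (cpn.c n₀) :=
    ((hQsm.contDiffAt (hW₁o.mem_nhds hv₀W₁)).differentiableAt h1top).hasFDerivAt
  have hPd : HasFDerivAt P (fderiv ℝ P (cpf.c (f x))) (Q (cpn.c n₀)) := by
    rw [hQv₀]
    exact ((hPsm.contDiffAt (hV'₂o.mem_nhds hufV'₂)).differentiableAt h1top).hasFDerivAt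
  have hfderivA : fderiv ℝ A (cpn.c n₀) =
      (fderiv ℝ P (cpf.c (f x))).comp (fderiv ℝ Q (cpn.c n₀)) := by
    have h1 : HasFDerivAt (P ∘ Q)
        ((fderiv ℝ P (cpf.c (f x))).comp (fderiv ℝ Q (cpn.c n₀))) (cpn.c n₀) :=
      hPd.comp _ hQd
    have h2 : HasFDerivAt A
        ((fderiv ℝ P (cpf.c (f x))).comp (fderiv ℝ Q (cpn.c n₀))) (cpn.c n₀) := by
      refine h1.congr_of_eventuallyEq ?_
      filter_upwards [hsAo.mem_nhds hv₀sA] with v hv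
      exact hAPQ hv
    exact h2.fderiv
  have hPQbij : Function.Bijective
      ((fderiv ℝ P (cpf.c (f x))).comp (fderiv ℝ Q (cpn.c n₀))) := by
    rw [← hfderivA]; exact hAbij
  have hPQfun : ⇑((fderiv ℝ P (cpf.c (f x))).comp (fderiv ℝ Q (cpn.c n₀))) =
      ⇑(fderiv ℝ P (cpf.c (f x))) ∘ ⇑(fderiv ℝ Q (cpn.c n₀)) := rfl
  have hPsurj : Function.Surjective (fderiv ℝ P (cpf.c (f x))) := by
    have := hPQbij.2
    rw [hPQfun] at this
    exact this.of_comp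
  have hQinj : Function.Injective (fderiv ℝ Q (cpn.c n₀)) := by
    have := hPQbij.1
    rw [hPQfun] at this
    exact Function.Injective.of_comp this
  -- apply the dimension lemma
  have hPinj : Function.Injective (fderiv ℝ P (cpf.c (f x))) := by
    refine lemB hD (π := π)
      (plot_mono hD cpf.plot hV'₂o (fun u hu => hV'sub hu.1))
      (cpf.injOn_φ.mono (fun u hu => hV'sub hu.1)) hufV'₂ hPsm
      (ξ := σ ∘ cpn.φ) ?_ ?_ hPsurj
    · intro u hu
      have h1 : σ (ψ' u) = π (cpf.φ u) := hψ'eq hu.1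
      have h2 : cpn.φ (cpn.c (ψ' u)) = ψ' u := cpn.right_inv _ hu.2
      show π (cpf.φ u) = σ (cpn.φ (P u))
      show π (cpf.φ u) = σ (cpn.φ (cpn.c (ψ' u)))
      rw [h2, h1]
    · exact hTD _
  have hde : d = e := by
    have h1 : Module.finrank ℝ (Fin d → ℝ) = Module.finrank ℝ (Fin e → ℝ) :=
      LinearEquiv.finrank_eq
        (LinearEquiv.ofBijective ((fderiv ℝ P (cpf.c (f x))) : (Fin d → ℝ) →ₗ[ℝ] (Fin e → ℝ))
          ⟨hPinj, hPsurj⟩)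
    simpa [Module.finrank_fin_fun] using h1
  have hfr : Module.finrank ℝ (Fin e → ℝ) = Module.finrank ℝ (Fin d → ℝ) := by
    simp [Module.finrank_fin_fun, hde]
  have hQbij : Function.Bijective (fderiv ℝ Q (cpn.c n₀)) := by
    refine ⟨hQinj, ?_⟩
    have := (LinearMap.injective_iff_surjective_of_finrank_eq_finrank hfr
      (f := ((fderiv ℝ Q (cpn.c n₀)) : (Fin e → ℝ) →ₗ[ℝ] (Fin d → ℝ)))).1
    exact this hQinj
  -- decompose Q = F₀ ∘ R near v₀
  set F₀ : (Fin d → ℝ) → (Fin d → ℝ) := fun u => cpf.c (f (cpx.φ u)) with hF₀def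
  set R : (Fin e → ℝ) → (Fin d → ℝ) := fun v => cpx.c (χ v) with hRdef
  set sF := cpx.U ∩ cpx.φ ⁻¹' (O ∩ f ⁻¹' (cpf.S ∩ cpf.c ⁻¹' V')) with hsFdef
  have hsFo : IsOpen sF := (cpx.continuousOn_φ hD).isOpen_inter_preimage cpx.openU hSMo
  have huxsF : cpx.c x ∈ sF := ⟨cpx.memU, by rw [mem_preimage, cpx.φ_c]; exact hxSM⟩
  set W₃ := W₁ ∩ χ ⁻¹' cpx.S with hW₃def
  have hW₃o : IsOpen W₃ :=
    ((plot_continuousOn hD hχplot).mono inter_subset_left).isOpen_inter_preimage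
      hW₁o cpx.openS
  have hv₀W₃ : cpn.c n₀ ∈ W₃ := ⟨hv₀W₁, by rw [mem_preimage, hχv₀]; exact cpx.memS⟩
  have hRv₀ : R (cpn.c n₀) = cpx.c x := by
    show cpx.c (χ (cpn.c n₀)) = cpx.c x
    rw [hχv₀]
  have hF₀ux : F₀ (cpx.c x) = cpf.c (f x) := by
    show cpf.c (f (cpx.φ (cpx.c x))) = cpf.c (f x)
    rw [cpx.φ_c]
  have hQFR : Set.EqOn Q (F₀ ∘ R) W₃ := by
    intro v hv
    show cpf.c (f (χ v)) = cpf.c (f (cpx.φ (cpx.c (χ v))))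
    rw [cpx.right_inv _ hv.2]
  have hF₀sm : ContDiffOn ℝ (⊤ : ℕ∞) F₀ sF := by
    have h1 : ContMDiffOn 𝓘(ℝ, Fin d → ℝ) (𝓡 d) (⊤ : ℕ∞) cpx.φ sF :=
      (cpx.smooth_φ hD).mono inter_subset_left
    have h2 : ContMDiffOn 𝓘(ℝ, Fin d → ℝ) (𝓡 d) (⊤ : ℕ∞) (f ∘ cpx.φ) sF :=
      hfsm.comp h1 (fun u hu => hu.2.1)
    have h3 : ContMDiffOn 𝓘(ℝ, Fin d → ℝ) 𝓘(ℝ, Fin d → ℝ) (⊤ : ℕ∞) (cpf.c ∘ (f ∘ cpx.φ)) sF :=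
      cpf.smooth_c.comp h2 (fun u hu => hu.2.2.1)
    exact h3.contDiffOn
  have hRsm : ContDiffOn ℝ (⊤ : ℕ∞) R W₃ := by
    have h1 : ContMDiffOn 𝓘(ℝ, Fin e → ℝ) (𝓡 d) (⊤ : ℕ∞) χ W₃ :=
      hχsm.mono (fun v hv => hv.1.1)
    have h2 : ContMDiffOn 𝓘(ℝ, Fin e → ℝ) 𝓘(ℝ, Fin d → ℝ) (⊤ : ℕ∞) (cpx.c ∘ χ) W₃ :=
      cpx.smooth_c.comp h1 (fun v hv => hv.2)
    exact h2.contDiffOn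
  have hRd : HasFDerivAt R (fderiv ℝ R (cpn.c n₀)) (cpn.c n₀) :=
    ((hRsm.contDiffAt (hW₃o.mem_nhds hv₀W₃)).differentiableAt h1top).hasFDerivAt
  have hF₀d : HasFDerivAt F₀ (fderiv ℝ F₀ (cpx.c x)) (R (cpn.c n₀)) := by
    rw [hRv₀]
    exact ((hF₀sm.contDiffAt (hsFo.mem_nhds huxsF)).differentiableAt h1top).hasFDerivAt
  have hfderivQ : fderiv ℝ Q (cpn.c n₀) =
      (fderiv ℝ F₀ (cpx.c x)).comp (fderiv ℝ R (cpn.c n₀)) := by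
    have h1 : HasFDerivAt (F₀ ∘ R)
        ((fderiv ℝ F₀ (cpx.c x)).comp (fderiv ℝ R (cpn.c n₀))) (cpn.c n₀) :=
      hF₀d.comp _ hRd
    have h2 : HasFDerivAt Q
        ((fderiv ℝ F₀ (cpx.c x)).comp (fderiv ℝ R (cpn.c n₀))) (cpn.c n₀) := by
      refine h1.congr_of_eventuallyEq ?_
      filter_upwards [hW₃o.mem_nhds hv₀W₃] with v hv
      exact hQFR hv
    exact h2.fderiv
  have hFRbij : Function.Bijective
      ((fderiv ℝ F₀ (cpx.c x)).comp (fderiv ℝ R (cpn.c n₀))) := by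
    rw [← hfderivQ]; exact hQbij
  have hFRfun : ⇑((fderiv ℝ F₀ (cpx.c x)).comp (fderiv ℝ R (cpn.c n₀))) =
      ⇑(fderiv ℝ F₀ (cpx.c x)) ∘ ⇑(fderiv ℝ R (cpn.c n₀)) := rfl
  have hRinj : Function.Injective (fderiv ℝ R (cpn.c n₀)) := by
    have := hFRbij.1
    rw [hFRfun] at this
    exact Function.Injective.of_comp this
  have hRsurj : Function.Surjective (fderiv ℝ R (cpn.c n₀)) := by
    have := (LinearMap.injective_iff_surjective_of_finrank_eq_finrank hfr
      (f := ((fderiv ℝ R (cpn.c n₀)) : (Fin e → ℝ) →ₗ[ℝ] (Fin d → ℝ)))).1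
    exact this hRinj
  have hF₀bij : Function.Bijective (fderiv ℝ F₀ (cpx.c x)) := by
    constructor
    · intro a b hab
      obtain ⟨a', rfl⟩ := hRsurj a
      obtain ⟨b', rfl⟩ := hRsurj b
      have : ((fderiv ℝ F₀ (cpx.c x)).comp (fderiv ℝ R (cpn.c n₀))) a' =
          ((fderiv ℝ F₀ (cpx.c x)).comp (fderiv ℝ R (cpn.c n₀))) b' := hab
      have := hFRbij.1 this
      rw [this]
    · have := hFRbij.2
      rw [hFRfun] at this
      exact this.of_comp
  -- inverse function theorem for F₀
  obtain ⟨s₀, t₀, G, hs₀o, huxs₀, hs₀sF, ht₀o, hF₀inj, hF₀img, hGsm, hGl, hGr, hGmaps⟩ :=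
    lemInv hsFo hF₀sm huxsF hF₀bij
  -- final assembly
  have ht₀U : t₀ ⊆ cpf.U := by
    rw [← hF₀img]
    rintro w ⟨u, hu, rfl⟩
    exact cpf.maps_c (hs₀sF hu).2.2.1
  have hfV : ∀ u ∈ s₀, f (cpx.φ u) = cpf.φ (F₀ u) := by
    intro u hu
    have h1 : f (cpx.φ u) ∈ cpf.S := (hs₀sF hu).2.2.1
    exact (cpf.right_inv _ h1).symm
  have himgf : f '' (cpx.φ '' s₀) = cpf.φ '' t₀ := by
    rw [← hF₀img]
    ext w
    constructor
    · rintro ⟨z, ⟨u, hu, rfl⟩, rfl⟩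
      exact ⟨F₀ u, ⟨u, hu, rfl⟩, (hfV u hu).symm⟩
    · rintro ⟨z, ⟨u, hu, rfl⟩, rfl⟩
      exact ⟨cpx.φ u, ⟨u, hu, rfl⟩, hfV u hu⟩
  refine ⟨cpx.φ '' s₀, ?_, ?_, ?_, ?_, ?_, ?_⟩
  · rintro z ⟨u, hu, rfl⟩
    exact (hs₀sF hu).2.1
  · exact (dOpen_iff hD).2 (cpx.image_open hs₀o (fun u hu => (hs₀sF hu).1))
  · exact ⟨cpx.c x, huxs₀, cpx.φ_c⟩
  · rw [himgf]
    exact (dOpen_iff hD).2 (cpf.image_open ht₀o ht₀U)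
  · rintro z ⟨u1, hu1, rfl⟩ z2 ⟨u2, hu2, rfl⟩ hzz
    rw [hfV u1 hu1, hfV u2 hu2] at hzz
    have h1 : F₀ u1 = F₀ u2 :=
      cpf.injOn_φ (ht₀U (hF₀img ▸ ⟨u1, hu1, rfl⟩)) (ht₀U (hF₀img ▸ ⟨u2, hu2, rfl⟩)) hzz
    rw [hF₀inj hu1 hu2 h1]
  · refine ⟨fun m => cpx.φ (G (cpf.c m)), ?_, ?_⟩
    · -- smoothness of the inverse
      refine contMDiffOn_dsmoothOn hD hD ?_
      have hsub1 : f '' (cpx.φ '' s₀) ⊆ cpf.S := by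
        rw [himgf]
        rintro w ⟨z, hz, rfl⟩
        exact cpf.maps_φ (ht₀U hz)
      have hmaps1 : ∀ w ∈ f '' (cpx.φ '' s₀), cpf.c w ∈ t₀ := by
        rw [himgf]
        rintro w ⟨z, hz, rfl⟩
        rw [cpf.left_inv z (ht₀U hz)]
        exact hz
      have h1 : ContMDiffOn (𝓡 d) 𝓘(ℝ, Fin d → ℝ) (⊤ : ℕ∞) cpf.c (f '' (cpx.φ '' s₀)) :=
        cpf.smooth_c.mono hsub1
      have h2 : ContMDiffOn (𝓡 d) 𝓘(ℝ, Fin d → ℝ) (⊤ : ℕ∞) (G ∘ cpf.c) (f '' (cpx.φ '' s₀)) :=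
        (hGsm.contMDiffOn).comp h1 (fun w hw => hmaps1 w hw)
      have h3 : ContMDiffOn (𝓡 d) (𝓡 d) (⊤ : ℕ∞) (cpx.φ ∘ (G ∘ cpf.c)) (f '' (cpx.φ '' s₀)) :=
        (cpx.smooth_φ hD).comp h2
          (fun w hw => (hs₀sF (hGmaps (hmaps1 w hw))).1)
      exact h3
    · rintro z ⟨u, hu, rfl⟩
      show cpx.φ (G (cpf.c (f (cpx.φ u)))) = cpx.φ u
      rw [hfV u hu]
      have h1 : cpf.c (cpf.φ (F₀ u)) = F₀ u :=
        cpf.left_inv _ (ht₀U (hF₀img ▸ ⟨u, hu, rfl⟩))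
      rw [h1, hGl u hu]
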